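/- Fix an integer m ≥ 1, dimensions d₁,…,d_m ≥ 1, and for each i ∈ {1,…,m} a Hermitian matrix B_i ∈ ℂ^{d_i × d_i} whose smallest eigenvalue μ_i has multiplicity one and whose second-smallest eigenvalue is at least μ_i + g for some g > 0. Let H be the matrix indexed by tuples x, y ∈ Π_{i=1}^m {1,…,d_i} with entries H(x, y) = Σ_{i=1}^m 4^{−(i−1)} · B_i(x_i, y_i) · Π_{j ≠ i} δ_{x_j, y_j} (i.e. H = Σ_i 4^{−(i−1)} I ⊗ ⋯ ⊗ B_i ⊗ ⋯ ⊗ I on ℂ^{d₁} ⊗ ⋯ ⊗ ℂ^{d_m}). Then H is Hermitian, its smallest eigenvalue equals Σ_{i=1}^m 4^{−(i−1)} μ_i and has multiplicity one, and its spectral gap (the difference between its second-smallest and smallest eigenvalues, counted with multiplicity) is at least g/4^{m−1}; in particular it is at least g/4^m. -/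

import Mathlib

/-! Conjugating by the tensor product `U = ⊗ᵢ Uᵢ` of eigenvector unitaries of the `Bᵢ` makes every
`I ⊗ ⋯ ⊗ Bᵢ ⊗ ⋯ ⊗ I` diagonal, so `H` is unitarily equivalent to the diagonal matrix with entries
`f z = Σᵢ 4^{-i} λᵢ(zᵢ)`, `λᵢ` the eigenvalues of `Bᵢ`; these are the eigenvalues of `H` with
multiplicity. Each `λᵢ` attains `μᵢ` exactly once, so `f` attains `Σᵢ 4^{-i} μᵢ` exactly at the
tuple of minimisers; any other tuple differs from it in some coordinate `i`, which raises `f` by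
at least `4^{-i} g ≥ g / 4^{m-1}`. -/

/-- The Hamiltonian `H = Σ_i 4^{−(i−1)} I ⊗ ⋯ ⊗ B_i ⊗ ⋯ ⊗ I` on `ℂ^{d₁} ⊗ ⋯ ⊗ ℂ^{d_m}`,
with entries `H(x, y) = Σ_i 4^{−(i−1)} B_i(x_i, y_i) Π_{j≠i} δ_{x_j, y_j}`
(here `i` is zero-indexed). -/
noncomputable def queryHam (m : ℕ) (d : Fin m → ℕ)
    (B : (i : Fin m) → Matrix (Fin (d i)) (Fin (d i)) ℂ) :
    Matrix ((i : Fin m) → Fin (d i)) ((i : Fin m) → Fin (d i)) ℂ :=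
  Matrix.of fun x y =>
    ∑ i : Fin m, ((4 : ℂ)⁻¹) ^ (i : ℕ) * B i (x i) (y i) *
      ∏ j ∈ Finset.univ.erase i, (if x j = y j then (1 : ℂ) else 0)

open Finset Matrix

namespace Matrix

variable {ι R : Type*} [Fintype ι] {m n p : ι → Type*}

def piKronecker [CommMonoid R] (A : ∀ i, Matrix (m i) (n i) R) :
    Matrix (∀ i, m i) (∀ i, n i) R :=
  of fun x y => ∏ i, A i (x i) (y i)

@[simp]
lemma piKronecker_apply [CommMonoid R] (A : ∀ i, Matrix (m i) (n i) R) (x : ∀ i, m i)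
    (y : ∀ i, n i) : piKronecker A x y = ∏ i, A i (x i) (y i) := rfl

lemma piKronecker_mul_piKronecker [CommSemiring R] [DecidableEq ι] [∀ i, Fintype (n i)]
    (A : ∀ i, Matrix (m i) (n i) R) (B : ∀ i, Matrix (n i) (p i) R) :
    piKronecker A * piKronecker B = piKronecker fun i => A i * B i := by
  ext x z
  simp only [mul_apply, piKronecker_apply, ← prod_mul_distrib]
  exact (Fintype.prod_sum fun i j => A i (x i) j * B i j (z i)).symm

lemma piKronecker_one [CommSemiring R] [∀ i, DecidableEq (m i)] :
    piKronecker (fun i => (1 : Matrix (m i) (m i) R)) = 1 := by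
  ext x y
  simp [one_apply, prod_boole, funext_iff]

lemma conjTranspose_piKronecker [CommSemiring R] [StarRing R] (A : ∀ i, Matrix (m i) (n i) R) :
    (piKronecker A)ᴴ = piKronecker fun i => (A i)ᴴ := by
  ext x y
  simp [star_prod]

variable [DecidableEq ι] [∀ i, DecidableEq (m i)]

lemma piKronecker_mem_unitaryGroup [∀ i, Fintype (m i)] [CommRing R] [StarRing R]
    {U : ∀ i, Matrix (m i) (m i) R} (hU : ∀ i, U i ∈ unitaryGroup (m i) R) :
    piKronecker U ∈ unitaryGroup (∀ i, m i) R := by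
  rw [mem_unitaryGroup_iff, star_eq_conjTranspose, conjTranspose_piKronecker,
    piKronecker_mul_piKronecker]
  simp_rw [← star_eq_conjTranspose, mem_unitaryGroup_iff.mp (hU _), piKronecker_one]

/-- `Pi.mulSingle i A` is the family `(1, …, 1, A, 1, …, 1)`, so this is `I ⊗ ⋯ ⊗ A ⊗ ⋯ ⊗ I`. -/
lemma piKronecker_mulSingle_apply [CommSemiring R] (i : ι) (A : Matrix (m i) (m i) R)
    (x y : ∀ i, m i) :
    piKronecker (Pi.mulSingle i A) x y
      = A (x i) (y i) * ∏ j ∈ univ.erase i, (1 : Matrix (m j) (m j) R) (x j) (y j) := by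
  rw [piKronecker_apply, ← mul_prod_erase _ _ (mem_univ i), Pi.mulSingle_eq_same]
  congr 1
  refine prod_congr rfl fun j hj => ?_
  rw [Pi.mulSingle_eq_of_ne (ne_of_mem_erase hj)]

lemma piKronecker_mulSingle_diagonal [CommSemiring R] (i : ι) (v : m i → R) :
    piKronecker (Pi.mulSingle i (diagonal v)) = diagonal fun x => v (x i) := by
  ext x y
  rw [piKronecker_mulSingle_apply]
  by_cases hxy : x = y
  · subst hxy; simp
  · obtain ⟨j, hj⟩ := Function.ne_iff.mp hxy
    rw [diagonal_apply_ne _ hxy]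
    by_cases hji : j = i
    · subst hji; simp [diagonal_apply_ne _ hj]
    · rw [prod_eq_zero (f := fun j => (1 : Matrix (m j) (m j) R) (x j) (y j))
        (mem_erase.mpr ⟨hji, mem_univ j⟩) (one_apply_ne hj), mul_zero]

lemma conj_piKronecker_mulSingle [∀ i, Fintype (m i)] [CommSemiring R] [StarRing R]
    {U : ∀ i, Matrix (m i) (m i) R} (hU : ∀ i, star (U i) * U i = 1) (i : ι)
    (A : Matrix (m i) (m i) R) :
    star (piKronecker U) * piKronecker (Pi.mulSingle i A) * piKronecker U
      = piKronecker (Pi.mulSingle i (star (U i) * A * U i)) := by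
  rw [star_eq_conjTranspose, conjTranspose_piKronecker, piKronecker_mul_piKronecker,
    piKronecker_mul_piKronecker]
  congr 1
  funext j
  exact Pi.apply_mulSingle (fun j M => (U j)ᴴ * M * U j)
    (fun j => by rw [mul_one, ← star_eq_conjTranspose, hU]) i A j

lemma isHermitian_of_conj_eq_diagonal {𝕜 n : Type*} [RCLike 𝕜] [Fintype n] [DecidableEq n]
    {A U : Matrix n n 𝕜} (hU : U ∈ unitaryGroup n 𝕜) {f : n → ℝ}
    (h : star U * A * U = diagonal (RCLike.ofReal ∘ f)) : A.IsHermitian := by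
  have hA : A = U * diagonal (RCLike.ofReal ∘ f) * Uᴴ := by
    rw [← h, ← star_eq_conjTranspose, ← mul_assoc, ← mul_assoc, mem_unitaryGroup_iff.mp hU,
      one_mul, mul_assoc, mem_unitaryGroup_iff.mp hU, mul_one]
  rw [hA]
  exact isHermitian_mul_mul_conjTranspose U (isHermitian_diagonal_of_self_adjoint _
    (funext fun i => RCLike.conj_ofReal (f i)))

open Polynomial in
lemma IsHermitian.map_eigenvalues_eq_of_conj_eq_diagonal {𝕜 n : Type*} [RCLike 𝕜] [Fintype n]
    [DecidableEq n] {A U : Matrix n n 𝕜} (hA : A.IsHermitian) (hU : U ∈ unitaryGroup n 𝕜)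
    {f : n → ℝ} (h : star U * A * U = diagonal (RCLike.ofReal ∘ f)) :
    univ.val.map hA.eigenvalues = univ.val.map f := by
  have hchar : A.charpoly = (diagonal (RCLike.ofReal ∘ f)).charpoly := by
    rw [← h, mul_assoc, charpoly_mul_comm, mul_assoc, mem_unitaryGroup_iff.mp hU, mul_one]
  have hroots := congrArg roots hchar
  rw [hA.roots_charpoly_eq_eigenvalues, charpoly_diagonal,
    roots_prod _ _ (prod_ne_zero_iff.mpr fun i _ => X_sub_C_ne_zero _)] at hroots
  simp only [roots_X_sub_C, Multiset.bind_singleton] at hroots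
  rw [← Multiset.map_map, ← Multiset.map_map] at hroots
  exact Multiset.map_injective RCLike.ofReal_injective hroots

variable {𝕜 : Type*} [RCLike 𝕜] [∀ i, Fintype (m i)]

lemma conj_sum_smul_piKronecker_mulSingle {B : ∀ i, Matrix (m i) (m i) 𝕜}
    (hB : ∀ i, (B i).IsHermitian) (c : ι → ℝ) :
    star (piKronecker fun i => ((hB i).eigenvectorUnitary : Matrix (m i) (m i) 𝕜)) *
        (∑ i, (c i : 𝕜) • piKronecker (Pi.mulSingle i (B i))) *
        piKronecker (fun i => ((hB i).eigenvectorUnitary : Matrix (m i) (m i) 𝕜))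
      = diagonal (RCLike.ofReal ∘ fun x => ∑ i, c i * (hB i).eigenvalues (x i)) := by
  have hdiag : ∀ i, star ((hB i).eigenvectorUnitary : Matrix (m i) (m i) 𝕜) * B i *
      ((hB i).eigenvectorUnitary : Matrix (m i) (m i) 𝕜)
        = diagonal (RCLike.ofReal ∘ (hB i).eigenvalues) := fun i => by
    simpa [Unitary.conjStarAlgAut_apply] using (hB i).conjStarAlgAut_star_eigenvectorUnitary
  simp only [mul_sum, sum_mul, mul_smul_comm, smul_mul_assoc,
    conj_piKronecker_mulSingle fun i => Unitary.star_mul_self_of_mem (hB i).eigenvectorUnitary.2,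
    hdiag, piKronecker_mulSingle_diagonal]
  ext x y
  by_cases hxy : x = y
  · subst hxy; simp [sum_apply]
  · simp [sum_apply, hxy]

end Matrix

def IsGappedMinimum {α : Type*} (f : α → ℝ) (e g : ℝ) : Prop :=
  (∃! a, f a = e) ∧ ∀ a, f a ≠ e → e + g ≤ f a

namespace IsGappedMinimum

variable {α : Type*} {f : α → ℝ} {e g : ℝ}

lemma le (h : IsGappedMinimum f e g) (hg : 0 ≤ g) (a : α) : e ≤ f a := by
  by_cases ha : f a = e
  · exact ha.ge
  · linarith [h.2 a ha]

lemma mono {g' : ℝ} (h : IsGappedMinimum f e g) (hg' : g' ≤ g) : IsGappedMinimum f e g' :=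
  ⟨h.1, fun a ha => by linarith [h.2 a ha]⟩

lemma of_map_univ_eq {β : Type*} [Fintype α] [Fintype β] {f' : β → ℝ}
    (hff' : univ.val.map f = univ.val.map f') (h : IsGappedMinimum f' e g) :
    IsGappedMinimum f e g := by
  classical
  refine ⟨?_, fun a ha => ?_⟩
  · have hcount := congrArg (Multiset.countP (· = e)) hff'
    rw [Multiset.countP_map, Multiset.countP_map] at hcount
    rw [Fintype.existsUnique_iff_card_one, card_def, filter_val, hcount, ← filter_val,
      ← card_def, ← Fintype.existsUnique_iff_card_one]
    exact h.1
  · obtain ⟨b, -, hb⟩ := Multiset.mem_map.mp (hff' ▸ Multiset.mem_map_of_mem f (mem_univ_val a))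
    rw [← hb] at ha ⊢
    exact h.2 b ha

lemma weighted_sum {ι : Type*} [Fintype ι] {κ : ι → Type*} {f : ∀ i, κ i → ℝ} {e : ι → ℝ}
    {c : ι → ℝ} {ε : ℝ} (hf : ∀ i, IsGappedMinimum (f i) (e i) g) (hg : 0 ≤ g)
    (hc : ∀ i, 0 < c i) (hε : ∀ i, ε ≤ c i * g) :
    IsGappedMinimum (fun x : ∀ i, κ i => ∑ i, c i * f i (x i)) (∑ i, c i * e i) ε := by
  choose z₀ hz₀ huniq using fun i => (hf i).1
  have hle : ∀ (x : ∀ i, κ i) i, c i * e i ≤ c i * f i (x i) := fun x i =>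
    mul_le_mul_of_nonneg_left ((hf i).le hg _) (hc i).le
  refine ⟨⟨z₀, by simp only [hz₀], fun x hx => funext fun i => huniq i _ ?_⟩, fun x hx => ?_⟩
  · have hterm := (sum_eq_sum_iff_of_le fun i _ => hle x i).mp hx.symm i (mem_univ i)
    exact (mul_left_cancel₀ (hc i).ne' hterm).symm
  · obtain ⟨i, hi⟩ : ∃ i, f i (x i) ≠ e i := by
      by_contra! h
      exact hx (by simp only [h])
    have hsingle : c i * f i (x i) - c i * e i ≤ ∑ j, c j * f j (x j) - ∑ j, c j * e j := by
      rw [← sum_sub_distrib]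
      exact single_le_sum (f := fun j => c j * f j (x j) - c j * e j)
        (fun j _ => sub_nonneg.mpr (hle x j)) (mem_univ i)
    have hgap : c i * (e i + g) ≤ c i * f i (x i) :=
      mul_le_mul_of_nonneg_left ((hf i).2 _ hi) (hc i).le
    linarith [hε i]

end IsGappedMinimum

lemma queryHam_eq_sum (m : ℕ) (d : Fin m → ℕ)
    (B : (i : Fin m) → Matrix (Fin (d i)) (Fin (d i)) ℂ) :
    queryHam m d B
      = ∑ i : Fin m, ((((4 : ℝ)⁻¹) ^ (i : ℕ) : ℝ) : ℂ) • piKronecker (Pi.mulSingle i (B i)) := by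
  ext x y
  simp only [queryHam, of_apply, Matrix.sum_apply, Matrix.smul_apply, smul_eq_mul,
    piKronecker_mulSingle_apply, one_apply]
  push_cast
  exact sum_congr rfl fun i _ => by ring

theorem queryHam_spectral_gap_general (m : ℕ) (d : Fin m → ℕ)
    (B : (i : Fin m) → Matrix (Fin (d i)) (Fin (d i)) ℂ)
    (hB : ∀ i, (B i).IsHermitian)
    (μ : Fin m → ℝ) (g : ℝ) (hg : 0 < g)
    (hmult : ∀ i, (Finset.univ.filter fun j => (hB i).eigenvalues j = μ i).card = 1)
    (hgap : ∀ i j, (hB i).eigenvalues j ≠ μ i → μ i + g ≤ (hB i).eigenvalues j) :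
    ∃ hH : (queryHam m d B).IsHermitian,
      (∃ z, hH.eigenvalues z = ∑ i : Fin m, ((4 : ℝ)⁻¹) ^ (i : ℕ) * μ i) ∧
      (∀ z, ∑ i : Fin m, ((4 : ℝ)⁻¹) ^ (i : ℕ) * μ i ≤ hH.eigenvalues z) ∧
      (Finset.univ.filter fun z =>
        hH.eigenvalues z = ∑ i : Fin m, ((4 : ℝ)⁻¹) ^ (i : ℕ) * μ i).card = 1 ∧
      (∀ z, hH.eigenvalues z ≠ ∑ i : Fin m, ((4 : ℝ)⁻¹) ^ (i : ℕ) * μ i →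
        (∑ i : Fin m, ((4 : ℝ)⁻¹) ^ (i : ℕ) * μ i) + g / 4 ^ (m - 1) ≤ hH.eigenvalues z) ∧
      (∀ z, hH.eigenvalues z ≠ ∑ i : Fin m, ((4 : ℝ)⁻¹) ^ (i : ℕ) * μ i →
        (∑ i : Fin m, ((4 : ℝ)⁻¹) ^ (i : ℕ) * μ i) + g / 4 ^ m ≤ hH.eigenvalues z) := by
  set U := piKronecker fun i => ((hB i).eigenvectorUnitary : Matrix (Fin (d i)) (Fin (d i)) ℂ)
  have hU : U ∈ unitaryGroup _ ℂ :=
    piKronecker_mem_unitaryGroup fun i => (hB i).eigenvectorUnitary.2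
  have hconj : star U * queryHam m d B * U = diagonal (RCLike.ofReal ∘ fun x =>
      ∑ i : Fin m, ((4 : ℝ)⁻¹) ^ (i : ℕ) * (hB i).eigenvalues (x i)) := by
    rw [queryHam_eq_sum]
    exact conj_sum_smul_piKronecker_mulSingle hB _
  have hH := isHermitian_of_conj_eq_diagonal hU hconj
  have hdecay {j k : ℕ} (hjk : j ≤ k) : g / 4 ^ k ≤ g / 4 ^ j :=
    div_le_div_of_nonneg_left hg.le (by positivity) (pow_le_pow_right₀ (by norm_num) hjk)
  have hweight (i : Fin m) : g / 4 ^ (m - 1) ≤ ((4 : ℝ)⁻¹) ^ (i : ℕ) * g := by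
    rw [inv_pow, inv_mul_eq_div]
    exact hdecay (by omega)
  have hgapped : IsGappedMinimum hH.eigenvalues (∑ i : Fin m, ((4 : ℝ)⁻¹) ^ (i : ℕ) * μ i)
      (g / 4 ^ (m - 1)) :=
    (IsGappedMinimum.weighted_sum
      (fun i => ⟨(Fintype.existsUnique_iff_card_one _).mpr (hmult i), hgap i⟩) hg.le
      (fun i => by positivity) hweight).of_map_univ_eq
      (hH.map_eigenvalues_eq_of_conj_eq_diagonal hU hconj)
  obtain ⟨z, hz, -⟩ := hgapped.1
  refine ⟨hH, ⟨z, hz⟩, hgapped.le (by positivity),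
    (Fintype.existsUnique_iff_card_one _).mp hgapped.1, hgapped.2,
    (hgapped.mono (hdecay (Nat.sub_le m 1))).2⟩

/-- If each Hermitian `B_i` has smallest eigenvalue `μ_i` with multiplicity one and all
other eigenvalues at least `μ_i + g`, then `H = Σ_i 4^{−(i−1)} I ⊗ ⋯ ⊗ B_i ⊗ ⋯ ⊗ I` is
Hermitian with smallest eigenvalue `Σ_i 4^{−(i−1)} μ_i` of multiplicity one, and its
spectral gap is at least `g/4^{m−1}`; in particular at least `g/4^m`. -/
theorem queryHam_spectral_gap (m : ℕ) (hm : 1 ≤ m) (d : Fin m → ℕ) (hd : ∀ i, 1 ≤ d i)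
    (B : (i : Fin m) → Matrix (Fin (d i)) (Fin (d i)) ℂ)
    (hB : ∀ i, (B i).IsHermitian)
    (μ : Fin m → ℝ) (g : ℝ) (hg : 0 < g)
    (hmin : ∀ i j, μ i ≤ (hB i).eigenvalues j)
    (hex : ∀ i, ∃ j, (hB i).eigenvalues j = μ i)
    (hmult : ∀ i, (Finset.univ.filter fun j => (hB i).eigenvalues j = μ i).card = 1)
    (hgap : ∀ i j, (hB i).eigenvalues j ≠ μ i → μ i + g ≤ (hB i).eigenvalues j) :
    ∃ hH : (queryHam m d B).IsHermitian,
      (∃ z, hH.eigenvalues z = ∑ i : Fin m, ((4 : ℝ)⁻¹) ^ (i : ℕ) * μ i) ∧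
      (∀ z, ∑ i : Fin m, ((4 : ℝ)⁻¹) ^ (i : ℕ) * μ i ≤ hH.eigenvalues z) ∧
      (Finset.univ.filter fun z =>
        hH.eigenvalues z = ∑ i : Fin m, ((4 : ℝ)⁻¹) ^ (i : ℕ) * μ i).card = 1 ∧
      (∀ z, hH.eigenvalues z ≠ ∑ i : Fin m, ((4 : ℝ)⁻¹) ^ (i : ℕ) * μ i →
        (∑ i : Fin m, ((4 : ℝ)⁻¹) ^ (i : ℕ) * μ i) + g / 4 ^ (m - 1) ≤ hH.eigenvalues z) ∧
      (∀ z, hH.eigenvalues z ≠ ∑ i : Fin m, ((4 : ℝ)⁻¹) ^ (i : ℕ) * μ i →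
        (∑ i : Fin m, ((4 : ℝ)⁻¹) ^ (i : ℕ) * μ i) + g / 4 ^ m ≤ hH.eigenvalues z) :=
  queryHam_spectral_gap_general m d B hB μ g hg hmult hgap
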